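/- Suppose wᵀ₁q ≠ 0 and μ ∈ (−λ₂, −λ₁) is a simple root of s with s′(μ) > 0. Then μ is the second-rightmost root of s in ℂ: exactly one root of s (counted with multiplicity) has real part greater than μ, and no root of s other than μ has real part equal to μ. -/

import Mathlib

open Matrix Complex
open scoped Classical

noncomputable section

/-- Euclidean norm of a vector in `ℝⁿ`. -/
def euclNorm {n : ℕ} (x : Fin n → ℝ) : ℝ := Real.sqrt (x ⬝ᵥ x)

/-- The quadratic objective `f(x) = ½ xᵀPx + qᵀx`. -/
def qobj {n : ℕ} (P : Matrix (Fin n) (Fin n) ℝ) (q : Fin n → ℝ) (x : Fin n → ℝ) : ℝ :=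
  (1 / 2) * (x ⬝ᵥ P.mulVec x) + q ⬝ᵥ x

/-- The block matrix `M = [[-P, qqᵀ/r²], [I, -P]]`. -/
def trsM {n : ℕ} (P : Matrix (Fin n) (Fin n) ℝ) (q : Fin n → ℝ) (r : ℝ) :
    Matrix (Fin n ⊕ Fin n) (Fin n ⊕ Fin n) ℝ :=
  Matrix.fromBlocks (-P) ((r ^ 2)⁻¹ • Matrix.vecMulVec q q) 1 (-P)

/-- The complexification of `M`. -/
def trsMC {n : ℕ} (P : Matrix (Fin n) (Fin n) ℝ) (q : Fin n → ℝ) (r : ℝ) :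
    Matrix (Fin n ⊕ Fin n) (Fin n ⊕ Fin n) ℂ :=
  (trsM P q r).map Complex.ofReal

/-- `μ ∈ ℂ` is an eigenvalue of the complex matrix `A`. -/
def IsEig {m : Type*} [Fintype m] (A : Matrix m m ℂ) (μ : ℂ) : Prop :=
  ∃ v : m → ℂ, v ≠ 0 ∧ A.mulVec v = μ • v

/-- The secular function `s(z) = Σᵢ (wᵢᵀq)²/(λᵢ + z)² - r²` on `ℂ`. -/
def secular {n : ℕ} (lam : Fin n → ℝ) (w : Fin n → Fin n → ℝ) (q : Fin n → ℝ) (r : ℝ)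
    (z : ℂ) : ℂ :=
  (∑ i, ((w i ⬝ᵥ q : ℝ) : ℂ) ^ 2 / (((lam i : ℝ) : ℂ) + z) ^ 2) - (r : ℂ) ^ 2

/-- The secular function on `ℝ`. -/
def secularR {n : ℕ} (lam : Fin n → ℝ) (w : Fin n → Fin n → ℝ) (q : Fin n → ℝ) (r : ℝ)
    (t : ℝ) : ℝ :=
  (∑ i, (w i ⬝ᵥ q) ^ 2 / (lam i + t) ^ 2) - r ^ 2

/-- The derivative of the secular function, `s'(t) = -2 Σᵢ (wᵢᵀq)²/(λᵢ + t)³`. -/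
def secularDeriv {n : ℕ} (lam : Fin n → ℝ) (w : Fin n → Fin n → ℝ) (q : Fin n → ℝ)
    (t : ℝ) : ℝ :=
  -2 * ∑ i, (w i ⬝ᵥ q) ^ 2 / (lam i + t) ^ 3

/-- `z` is not a pole of the secular function (the poles are the `-λᵢ` with `wᵢᵀq ≠ 0`). -/
def IsNonpole {n : ℕ} (lam : Fin n → ℝ) (w : Fin n → Fin n → ℝ) (q : Fin n → ℝ) (z : ℂ) : Prop :=
  ∀ i, w i ⬝ᵥ q ≠ 0 → z ≠ -((lam i : ℝ) : ℂ)

/-- `f` has a zero of order exactly `k` at `z`. -/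
def HasZeroOfOrder (f : ℂ → ℂ) (z : ℂ) (k : ℕ) : Prop :=
  ∃ g : ℂ → ℂ, AnalyticAt ℂ g z ∧ g z ≠ 0 ∧ ∀ᶠ u in nhds z, f u = (u - z) ^ k * g u

end

section Helpers

noncomputable section

lemma secular_ofReal {n : ℕ} (lam : Fin n → ℝ) (w : Fin n → Fin n → ℝ) (q : Fin n → ℝ) (r : ℝ)
    (t : ℝ) : secular lam w q r (t:ℂ) = ((secularR lam w q r t : ℝ) : ℂ) := by
  simp only [secular, secularR]
  push_cast
  ring

lemma term_decomp (c d y : ℝ) :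
    (c:ℂ)^2 / ((d:ℂ) + (y:ℂ)*I)^2
      = ((c^2*(d^2-y^2)/((d^2+y^2)^2) : ℝ):ℂ) + ((-(2*c^2*d*y)/((d^2+y^2)^2) : ℝ):ℂ) * I := by
  rcases eq_or_ne ((d:ℂ) + (y:ℂ)*I) 0 with h | hne
  · have : d = 0 ∧ y = 0 := by
      constructor <;> [have := congrArg Complex.re h; have := congrArg Complex.im h] <;>
        simpa using this
    simp [h, this.1, this.2]
  · have h0 : (d^2+y^2 : ℝ) ≠ 0 := by
      intro h0
      apply hne
      have hd : d = 0 := by nlinarith [sq_nonneg d, sq_nonneg y]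
      have hyy : y = 0 := by nlinarith [sq_nonneg d, sq_nonneg y]
      simp [hd, hyy]
    have key : ((d:ℂ) + (y:ℂ)*I) * ((d:ℂ) - (y:ℂ)*I) = ((d^2+y^2 : ℝ):ℂ) := by
      push_cast; linear_combination (-(y:ℂ)^2) * Complex.I_sq
    have e1 : (c:ℂ)^2/((d:ℂ)+(y:ℂ)*I)^2 = (c:ℂ)^2 * ((d:ℂ)-(y:ℂ)*I)^2 / ((d^2+y^2:ℝ):ℂ)^2 := by
      rw [div_eq_div_iff (pow_ne_zero 2 hne) (pow_ne_zero 2 (Complex.ofReal_ne_zero.2 h0)), ← key]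
      ring
    have e2 : ((d:ℂ) - (y:ℂ)*I)^2 = ((d^2-y^2 : ℝ):ℂ) - ((2*d*y : ℝ):ℂ)*I := by
      push_cast; linear_combination ((y:ℂ)^2) * Complex.I_sq
    rw [e1, e2]
    have h0c : ((d^2+y^2 : ℝ):ℂ) ≠ 0 := Complex.ofReal_ne_zero.2 h0
    push_cast
    field_simp
    ring

lemma secular_re_im {n : ℕ} (lam : Fin n → ℝ) (w : Fin n → Fin n → ℝ) (q : Fin n → ℝ) (r : ℝ)
    (z : ℂ) (h : secular lam w q r z = 0) :
    (∑ i, (w i ⬝ᵥ q)^2*((lam i + z.re)^2 - z.im^2)/(((lam i + z.re)^2+z.im^2)^2) = r^2)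
  ∧ (∑ i, -(2*(w i ⬝ᵥ q)^2*(lam i + z.re)*z.im)/(((lam i + z.re)^2+z.im^2)^2) = 0) := by
  set x := z.re
  set y := z.im
  have hz : ∀ i : Fin n, ((lam i:ℝ):ℂ) + z = ((lam i + x :ℝ):ℂ) + (y:ℂ)*I := by
    intro i
    rw [← Complex.re_add_im z]
    push_cast
    ring
  have hs : secular lam w q r z =
      ((∑ i, (w i ⬝ᵥ q)^2*((lam i + x)^2 - y^2)/(((lam i + x)^2+y^2)^2) - r^2 : ℝ):ℂ)
      + ((∑ i, -(2*(w i ⬝ᵥ q)^2*(lam i + x)*y)/(((lam i + x)^2+y^2)^2) : ℝ):ℂ) * I := by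
    rw [secular]
    have : ∀ i ∈ Finset.univ, ((w i ⬝ᵥ q : ℝ) : ℂ) ^ 2 / (((lam i : ℝ) : ℂ) + z) ^ 2
        = (((w i ⬝ᵥ q)^2*((lam i + x)^2 - y^2)/(((lam i + x)^2+y^2)^2) : ℝ):ℂ)
          + ((-(2*(w i ⬝ᵥ q)^2*(lam i + x)*y)/(((lam i + x)^2+y^2)^2) : ℝ):ℂ) * I := by
      intro i _
      rw [hz i, term_decomp]
    rw [Finset.sum_congr rfl this, Finset.sum_add_distrib, ← Finset.sum_mul]
    push_cast
    ring
  rw [hs] at h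
  simp only [Complex.ext_iff, Complex.add_re, Complex.ofReal_re, Complex.mul_re, Complex.I_re,
    Complex.I_im, Complex.ofReal_im, Complex.add_im, Complex.mul_im, Complex.zero_re,
    Complex.zero_im, mul_zero, mul_one, zero_mul, sub_zero, add_zero, zero_add, neg_zero,
    zero_sub] at h
  constructor
  · linarith [h.1]
  · exact h.2

lemma star_term (c d e y δ : ℝ) (he : e ≠ 0) (hδ : d - e = δ) :
    δ * (-(2*c^2*d*y)/((d^2+y^2)^2)) - y * (c^2*(d^2-y^2)/((d^2+y^2)^2) - c^2/e^2)
      = y*(δ^2+y^2) * (c^2 * (d^2+y^2+2*d*e)/(e^2*((d^2+y^2)^2))) := by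
  subst hδ
  rcases eq_or_ne (d^2+y^2) 0 with h | h
  · have hd : d = 0 := by nlinarith [sq_nonneg d, sq_nonneg y]
    have hy : y = 0 := by nlinarith [sq_nonneg d, sq_nonneg y]
    simp [hd, hy]
  · field_simp
    ring

lemma star_contra {n : ℕ} (c d e : Fin n → ℝ) (y δ r : ℝ) (hy : y ≠ 0)
    (hδ : ∀ i, d i - e i = δ)
    (he : ∀ i, e i ≠ 0) (hde : ∀ i, 0 ≤ d i * e i)
    (i0 : Fin n) (hc0 : c i0 ≠ 0)
    (hA : ∑ i, -(2*(c i)^2*(d i)*y)/(((d i)^2+y^2)^2) = 0)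
    (hB : ∑ i, (c i)^2*((d i)^2-y^2)/(((d i)^2+y^2)^2) = r^2)
    (hC : ∑ i, (c i)^2/(e i)^2 = r^2) : False := by
  have hy2 : (0:ℝ) < y^2 := lt_of_le_of_ne (sq_nonneg y) (Ne.symm (pow_ne_zero 2 hy))
  have key : y*(δ^2+y^2) * (∑ i, (c i)^2 * ((d i)^2+y^2+2*(d i)*(e i))/((e i)^2*(((d i)^2+y^2)^2)))
      = ∑ i, (δ * (-(2*(c i)^2*(d i)*y)/(((d i)^2+y^2)^2))
          - y * ((c i)^2*((d i)^2-y^2)/(((d i)^2+y^2)^2) - (c i)^2/(e i)^2)) := by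
    rw [Finset.mul_sum]
    exact Finset.sum_congr rfl fun i _ => (star_term (c i) (d i) (e i) y δ (he i) (hδ i)).symm
  have key2 : ∑ i, (δ * (-(2*(c i)^2*(d i)*y)/(((d i)^2+y^2)^2))
          - y * ((c i)^2*((d i)^2-y^2)/(((d i)^2+y^2)^2) - (c i)^2/(e i)^2))
      = δ * (∑ i, -(2*(c i)^2*(d i)*y)/(((d i)^2+y^2)^2))
        - y * ((∑ i, (c i)^2*((d i)^2-y^2)/(((d i)^2+y^2)^2)) - ∑ i, (c i)^2/(e i)^2) := by
    rw [Finset.sum_sub_distrib, ← Finset.mul_sum, ← Finset.mul_sum, Finset.sum_sub_distrib,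
      mul_sub]
  rw [key2, hA, hB, hC, sub_self, mul_zero, mul_zero, sub_zero] at key
  have hKpos : 0 < ∑ i, (c i)^2 * ((d i)^2+y^2+2*(d i)*(e i))/((e i)^2*(((d i)^2+y^2)^2)) := by
    apply Finset.sum_pos'
    · intro i _
      have h1 : 0 < (d i)^2+y^2+2*(d i)*(e i) := by linarith [hde i, sq_nonneg (d i), hy2]
      have := he i
      positivity
    · refine ⟨i0, Finset.mem_univ _, ?_⟩
      have h1 : 0 < (d i0)^2+y^2+2*(d i0)*(e i0) := by linarith [hde i0, sq_nonneg (d i0), hy2]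
      have := he i0
      positivity
  have hne : y*(δ^2+y^2) ≠ 0 := by
    have : 0 < δ^2 + y^2 := by positivity
    exact mul_ne_zero hy (ne_of_gt this)
  rw [mul_eq_zero] at key
  rcases key with h | h
  · exact hne h
  · exact absurd h (ne_of_gt hKpos)

lemma plain_contra {n : ℕ} (c d : Fin n → ℝ) (y : ℝ) (hy : y ≠ 0) (hd : ∀ i, 0 < d i)
    (i0 : Fin n) (hc0 : c i0 ≠ 0)
    (hA : ∑ i, -(2*(c i)^2*(d i)*y)/(((d i)^2+y^2)^2) = 0) : False := by
  have key : ∑ i, -(2*(c i)^2*(d i)*y)/(((d i)^2+y^2)^2)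
      = (-2*y) * ∑ i, (c i)^2*(d i)/(((d i)^2+y^2)^2) := by
    rw [Finset.mul_sum]
    exact Finset.sum_congr rfl fun i _ => by ring
  rw [key] at hA
  have hpos : 0 < ∑ i, (c i)^2*(d i)/(((d i)^2+y^2)^2) := by
    apply Finset.sum_pos'
    · intro i _
      have h1 := hd i
      positivity
    · refine ⟨i0, Finset.mem_univ _, ?_⟩
      have h1 := hd i0
      positivity
  rcases mul_eq_zero.1 hA with h | h
  · have : y = 0 := by linarith [neg_eq_zero.1 (by linarith : -(2*y) = 0)]
    exact hy this
  · exact absurd h (ne_of_gt hpos)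

lemma conv_term (c d e : ℝ) (hde : 0 < d * e) :
    c^2/e^2 - 2*(d-e)*(c^2/e^3) ≤ c^2/d^2 := by
  have hd : d ≠ 0 := by rintro rfl; simp at hde
  have he : e ≠ 0 := by rintro rfl; simp at hde
  have key : c^2/d^2 - (c^2/e^2 - 2*(d-e)*(c^2/e^3))
      = c^2*((e-d)^2*(e+2*d))/(d^2*e^3) := by
    field_simp
    ring
  have hnn : 0 ≤ c^2*((e-d)^2*(e+2*d))/(d^2*e^3) := by
    rcases lt_or_gt_of_ne he with hel | heg
    · have hdl : d < 0 := by nlinarith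
      have h1 : (0:ℝ) ≤ c^2*(e-d)^2 := by positivity
      have h2 : e^3 < 0 := Odd.pow_neg (by decide) hel
      apply div_nonneg_of_nonpos
      · nlinarith [h1]
      · nlinarith [sq_nonneg d, h2]
    · have hdg : 0 < d := by nlinarith
      apply div_nonneg
      · positivity
      · positivity
  linarith

lemma order_one_of_deriv (f : ℂ → ℂ) (z₀ : ℂ) (hf : AnalyticAt ℂ f z₀) (h0 : f z₀ = 0)
    (h1 : deriv f z₀ ≠ 0) : HasZeroOfOrder f z₀ 1 := by
  rcases eq_or_ne (analyticOrderAt f z₀) ⊤ with htop | hne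
  · exfalso
    apply h1
    have hev : f =ᶠ[nhds z₀] (fun _ => 0) := analyticOrderAt_eq_top.1 htop
    rw [hev.deriv_eq]
    simp
  · obtain ⟨m, hm⟩ := WithTop.ne_top_iff_exists.1 hne
    obtain ⟨g, hg, hgz, hev⟩ := hf.analyticOrderAt_eq_natCast.1 hm.symm
    match m, hev with
    | 0, hev =>
      exfalso
      have := hev.self_of_nhds
      simp [h0] at this
      exact hgz this.symm
    | 1, hev =>
      exact ⟨g, hg, hgz, by simpa [smul_eq_mul] using hev⟩
    | (k+2), hev =>
      exfalso
      apply h1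
      have hev' : f =ᶠ[nhds z₀] (fun z => (z - z₀) ^ (k+2) * g z) := by
        simp only [smul_eq_mul] at hev; exact hev
      rw [hev'.deriv_eq]
      have hu : HasDerivAt (fun z : ℂ => (z - z₀)^(k+2)) (((k+2):ℕ) * (z₀ - z₀)^(k+1) * 1) z₀ := by
        simpa using ((hasDerivAt_id z₀).sub_const z₀).fun_pow (k+2)
      have hprod := hu.fun_mul (hg.differentiableAt.hasDerivAt)
      rw [hprod.deriv]
      simp

lemma secular_analyticAt {n : ℕ} (lam : Fin n → ℝ) (w : Fin n → Fin n → ℝ) (q : Fin n → ℝ)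
    (r : ℝ) (z : ℂ) (hz : ∀ i, ((lam i : ℝ):ℂ) + z ≠ 0) :
    AnalyticAt ℂ (secular lam w q r) z := by
  apply AnalyticAt.sub _ analyticAt_const
  apply Finset.analyticAt_fun_sum
  intro i _
  exact analyticAt_const.div ((analyticAt_const.add (analyticAt_id)).pow 2)
    (pow_ne_zero 2 (hz i))

lemma secular_hasDerivAt {n : ℕ} (lam : Fin n → ℝ) (w : Fin n → Fin n → ℝ) (q : Fin n → ℝ)
    (r : ℝ) (x : ℝ) (hx : ∀ i, lam i + x ≠ 0) :
    HasDerivAt (secular lam w q r) ((secularDeriv lam w q x : ℝ) : ℂ) ((x:ℝ):ℂ) := by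
  have hz : ∀ i, ((lam i : ℝ):ℂ) + (x:ℂ) ≠ 0 := by
    intro i
    rw [← Complex.ofReal_add, Complex.ofReal_ne_zero]
    exact hx i
  have hterm : ∀ i : Fin n, HasDerivAt (fun z : ℂ => ((w i ⬝ᵥ q : ℝ):ℂ)^2 / (((lam i : ℝ):ℂ) + z)^2)
      (((-2*(w i ⬝ᵥ q)^2/(lam i + x)^3 : ℝ)):ℂ) ((x:ℝ):ℂ) := by
    intro i
    have hden : HasDerivAt (fun z : ℂ => (((lam i : ℝ):ℂ) + z)^2)
        (2*(((lam i : ℝ):ℂ) + (x:ℂ))^1*1) ((x:ℝ):ℂ) := by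
      simpa using ((hasDerivAt_id ((x:ℝ):ℂ)).const_add ((lam i : ℝ):ℂ)).fun_pow 2
    have := (hasDerivAt_const ((x:ℝ):ℂ) (((w i ⬝ᵥ q : ℝ):ℂ)^2)).fun_div hden (pow_ne_zero 2 (hz i))
    refine this.congr_deriv ?_
    rw [show ((lam i : ℝ):ℂ) + (x:ℂ) = ((lam i + x : ℝ):ℂ) by push_cast; ring]
    have hre : (-2*(w i ⬝ᵥ q)^2/(lam i + x)^3 : ℝ)
        = (0*((lam i + x))^2 - (w i ⬝ᵥ q)^2*(2*(lam i + x)^1*1))/(((lam i + x))^2)^2 := by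
      field_simp [hx i]
      ring
    rw [hre]
    push_cast
    ring
  have hsum := HasDerivAt.fun_sum (u := (Finset.univ : Finset (Fin n))) (fun i _ => hterm i)
  have := hsum.sub_const ((r:ℂ)^2)
  unfold secular
  refine this.congr_deriv ?_
  rw [secularDeriv]
  push_cast
  rw [Finset.mul_sum]
  congr 1
  ext i
  ring

end

end Helpers

set_option maxHeartbeats 3000000 in
/-- if `w₁ᵀq ≠ 0` and `μ ∈ (-λ₂, -λ₁)` is a simple root of `s` with
`s'(μ) > 0`, then `μ` is the second-rightmost root of `s` in `ℂ`: exactly one root of `s`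
(counted with multiplicity) has real part greater than `μ`, and no root other than `μ`
has real part equal to `μ`. -/
theorem stmt_7 {n : ℕ} (hn : 1 < n)
    (P : Matrix (Fin n) (Fin n) ℝ) (hP : P.IsSymm)
    (lam : Fin n → ℝ) (w : Fin n → Fin n → ℝ)
    (hmono : Monotone lam)
    (heig : ∀ i, P.mulVec (w i) = lam i • w i)
    (horth : ∀ i j, w i ⬝ᵥ w j = if i = j then (1 : ℝ) else 0)
    (q : Fin n → ℝ) (r : ℝ) (hr : 0 < r)
    (μ : ℝ)
    (hc1 : w ⟨0, by omega⟩ ⬝ᵥ q ≠ 0)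
    (hμ1 : -(lam ⟨1, hn⟩) < μ) (hμ2 : μ < -(lam ⟨0, by omega⟩))
    (hsimple : HasZeroOfOrder (secular lam w q r) (μ : ℂ) 1)
    (hder : 0 < secularDeriv lam w q μ) :
    (∃ z₀ : ℂ, (μ : ℝ) < z₀.re ∧
        IsNonpole lam w q z₀ ∧ secular lam w q r z₀ = 0 ∧
        HasZeroOfOrder (secular lam w q r) z₀ 1 ∧
        (∀ z : ℂ, (μ : ℝ) < z.re → IsNonpole lam w q z → secular lam w q r z = 0 → z = z₀))
    ∧ (∀ z : ℂ, z.re = μ → z ≠ (μ : ℂ) → IsNonpole lam w q z →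
        secular lam w q r z ≠ 0) := by
  have h0n : 0 < n := by omega
  set i0 : Fin n := ⟨0, h0n⟩ with hi0
  set i1 : Fin n := ⟨1, hn⟩ with hi1
  -- basic index facts
  have hlam0le : ∀ i : Fin n, lam i0 ≤ lam i := by
    intro i
    exact hmono (by rw [Fin.le_def]; exact Nat.zero_le _)
  have hlam1le : ∀ i : Fin n, i ≠ i0 → lam i1 ≤ lam i := by
    intro i hi
    apply hmono
    have hv : (i : ℕ) ≠ 0 := fun h => hi (Fin.ext h)
    rw [Fin.le_def]
    show 1 ≤ (i : ℕ)
    omega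
  -- signs of e i = lam i + μ
  have he0 : lam i0 + μ < 0 := by linarith
  have he1 : ∀ i : Fin n, i ≠ i0 → 0 < lam i + μ := by
    intro i hi
    have := hlam1le i hi
    linarith
  have hene : ∀ i : Fin n, lam i + μ ≠ 0 := by
    intro i
    by_cases hi : i = i0
    · subst hi; linarith
    · exact ne_of_gt (he1 i hi)
  -- μ is a root
  have hμ0 : secular lam w q r ((μ:ℝ):ℂ) = 0 := by
    obtain ⟨g, hg, hgz, hev⟩ := hsimple
    have := hev.self_of_nhds
    simpa using this
  have hμR : secularR lam w q r μ = 0 := by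
    have := hμ0
    rw [secular_ofReal] at this
    exact_mod_cast this
  have hC : ∑ i, (w i ⬝ᵥ q)^2/(lam i + μ)^2 = r^2 := by
    rw [secularR] at hμR
    linarith
  have hS' : ∑ i, (w i ⬝ᵥ q)^2/(lam i + μ)^3 < 0 := by
    rw [secularDeriv] at hder
    linarith
  -- no nonreal roots with re ≥ μ
  have keyNonreal : ∀ z : ℂ, z.im ≠ 0 → (μ:ℝ) ≤ z.re → secular lam w q r z ≠ 0 := by
    intro z hy hx hzero
    obtain ⟨hB, hA⟩ := secular_re_im lam w q r z hzero
    by_cases hcase : z.re ≤ -(lam i0)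
    · refine star_contra (fun i => w i ⬝ᵥ q) (fun i => lam i + z.re) (fun i => lam i + μ)
        z.im (z.re - μ) r hy (fun i => by ring) hene ?_ i0 hc1 hA hB hC
      intro i
      show 0 ≤ (lam i + z.re) * (lam i + μ)
      by_cases hi : i = i0
      · subst hi
        have h1 : lam i0 + z.re ≤ 0 := by linarith
        nlinarith [mul_nonneg (neg_nonneg.2 h1) (neg_nonneg.2 (le_of_lt he0))]
      · have h1 := he1 i hi
        have h2 : 0 < lam i + z.re := by linarith
        positivity
    · push_neg at hcase
      refine plain_contra (fun i => w i ⬝ᵥ q) (fun i => lam i + z.re) z.im hy ?_ i0 hc1 hA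
      intro i
      show 0 < lam i + z.re
      by_cases hi : i = i0
      · subst hi; linarith
      · have := hlam1le i hi
        linarith
  -- no real roots strictly between μ and -lam i0
  have keyMid : ∀ x : ℝ, μ < x → x < -(lam i0) → 0 < secularR lam w q r x := by
    intro x hx1 hx2
    have hterm : ∀ i ∈ Finset.univ, (w i ⬝ᵥ q)^2/(lam i + μ)^2
        - 2*(x-μ)*((w i ⬝ᵥ q)^2/(lam i + μ)^3) ≤ (w i ⬝ᵥ q)^2/(lam i + x)^2 := by
      intro i _
      have hde : 0 < (lam i + x) * (lam i + μ) := by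
        by_cases hi : i = i0
        · subst hi
          have h1 : lam i0 + x < 0 := by linarith
          exact mul_pos_of_neg_of_neg h1 he0
        · have h1 := he1 i hi
          have h2 : 0 < lam i + x := by linarith
          positivity
      have h := conv_term (w i ⬝ᵥ q) (lam i + x) (lam i + μ) hde
      rw [show (lam i + x) - (lam i + μ) = x - μ by ring] at h
      exact h
    have hsum1 := Finset.sum_le_sum hterm
    have hsplit : ∑ i, ((w i ⬝ᵥ q)^2/(lam i + μ)^2 - 2*(x-μ)*((w i ⬝ᵥ q)^2/(lam i + μ)^3))
        = (∑ i, (w i ⬝ᵥ q)^2/(lam i + μ)^2) - 2*(x-μ)*(∑ i, (w i ⬝ᵥ q)^2/(lam i + μ)^3) := by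
      rw [Finset.sum_sub_distrib, ← Finset.mul_sum]
    rw [hsplit, hC] at hsum1
    have hneg : 2*(x-μ)*(∑ i, (w i ⬝ᵥ q)^2/(lam i + μ)^3) < 0 :=
      mul_neg_of_pos_of_neg (by linarith) hS'
    rw [secularR]
    linarith
  -- strictly decreasing to the right of -lam i0
  have hanti : StrictAntiOn (secularR lam w q r) (Set.Ioi (-(lam i0))) := by
    intro a ha b hb hab
    simp only [Set.mem_Ioi] at ha hb
    have hsum : ∑ i, (w i ⬝ᵥ q)^2/(lam i + b)^2 < ∑ i, (w i ⬝ᵥ q)^2/(lam i + a)^2 := by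
      apply Finset.sum_lt_sum
      · intro i _
        have h1 : 0 < lam i + a := by have := hlam0le i; linarith
        have h2 : lam i + a < lam i + b := by linarith
        gcongr
      · refine ⟨i0, Finset.mem_univ _, ?_⟩
        have h1 : 0 < lam i0 + a := by linarith
        have h2 : lam i0 + a < lam i0 + b := by linarith
        have hc2 : 0 < (w i0 ⬝ᵥ q)^2 := by positivity
        apply div_lt_div_of_pos_left hc2 (by positivity)
        have := pow_lt_pow_left₀ h2 (le_of_lt h1) (two_ne_zero)
        exact this
    rw [secularR, secularR]
    linarith
  -- existence of a root x₀ > -lam i0 via IVT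
  set a : ℝ := -(lam i0) with ha
  set c1 : ℝ := w i0 ⬝ᵥ q with hc1def
  set ε : ℝ := min 1 (|c1|/(2*r)) with hε
  have hεpos : 0 < ε := by
    apply lt_min one_pos
    have : 0 < |c1| := abs_pos.2 hc1
    positivity
  set C : ℝ := ∑ i, (w i ⬝ᵥ q)^2 with hCdef
  have hC0 : 0 ≤ C := Finset.sum_nonneg fun i _ => sq_nonneg _
  set t₁ : ℝ := a + ε with ht₁
  set t₂ : ℝ := a + 1 + C/r^2 with ht₂
  have ht₁₂ : t₁ ≤ t₂ := by
    have h1 : ε ≤ 1 := min_le_left _ _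
    have h2 : 0 ≤ C/r^2 := by positivity
    rw [ht₁, ht₂]; linarith
  have hf₁ : 0 < secularR lam w q r t₁ := by
    have hterm0 : c1^2/ε^2 ≤ ∑ i, (w i ⬝ᵥ q)^2/(lam i + t₁)^2 := by
      have : (w i0 ⬝ᵥ q)^2/(lam i0 + t₁)^2 = c1^2/ε^2 := by
        rw [show lam i0 + t₁ = ε by rw [ht₁, ha]; ring]
      rw [← this]
      apply Finset.single_le_sum (f := fun i => (w i ⬝ᵥ q)^2/(lam i + t₁)^2)
        (fun i _ => by positivity) (Finset.mem_univ i0)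
    have h4 : 4*r^2 ≤ c1^2/ε^2 := by
      have hle : ε ≤ |c1|/(2*r) := min_le_right _ _
      have h2 : ε^2 ≤ c1^2/(4*r^2) := by
        have := pow_le_pow_left₀ (le_of_lt hεpos) hle 2
        calc ε^2 ≤ (|c1|/(2*r))^2 := this
          _ = c1^2/(4*r^2) := by rw [div_pow, _root_.sq_abs]; ring_nf
      have h3 := mul_le_mul_of_nonneg_left h2 (by positivity : (0:ℝ) ≤ 4*r^2)
      have h4' : 4*r^2*(c1^2/(4*r^2)) = c1^2 := by field_simp
      rw [le_div_iff₀ (by positivity)]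
      nlinarith [h3, h4']
    have hr2 : 0 < r^2 := by positivity
    rw [secularR]
    linarith
  have hf₂ : secularR lam w q r t₂ < 0 := by
    have hbound : ∑ i, (w i ⬝ᵥ q)^2/(lam i + t₂)^2 ≤ C/(lam i0 + t₂)^2 := by
      rw [hCdef, Finset.sum_div]
      apply Finset.sum_le_sum
      intro i _
      have h1 : 0 < lam i0 + t₂ := by
        rw [ht₂, ha]
        have : 0 ≤ C/r^2 := by positivity
        linarith
      have h2 : lam i0 + t₂ ≤ lam i + t₂ := by have := hlam0le i; linarith
      gcongr
    have hval : lam i0 + t₂ = 1 + C/r^2 := by rw [ht₂, ha]; ring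
    have hlt : C/(lam i0 + t₂)^2 < r^2 := by
      rw [hval, div_lt_iff₀ (by positivity)]
      have h5 : 0 ≤ C^2/r^2 := by positivity
      have : r^2*(1 + C/r^2)^2 = r^2 + 2*C + C^2/r^2 := by
        field_simp
        ring
      rw [this]
      nlinarith
    rw [secularR]
    linarith
  obtain ⟨x₀, hx₀mem, hx₀⟩ : ∃ x₀ ∈ Set.Icc t₁ t₂, secularR lam w q r x₀ = 0 := by
    have hcont : ContinuousOn (secularR lam w q r) (Set.Icc t₁ t₂) := by
      apply ContinuousOn.sub _ continuousOn_const
      apply continuousOn_finset_sum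
      intro i _
      apply ContinuousOn.div continuousOn_const
      · exact ((continuous_const.add continuous_id).pow 2).continuousOn
      · intro t ht
        have h1 : 0 < lam i + t := by
          have := hlam0le i
          have := ht.1
          rw [ht₁, ha] at *
          linarith
        positivity
    have := intermediate_value_Icc' ht₁₂ hcont
    have h0mem : (0:ℝ) ∈ Set.Icc (secularR lam w q r t₂) (secularR lam w q r t₁) :=
      ⟨le_of_lt hf₂, le_of_lt hf₁⟩
    obtain ⟨x₀, hx₀mem, hx₀⟩ := this h0mem
    exact ⟨x₀, hx₀mem, hx₀⟩
  have hx₀gt : a < x₀ := by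
    have := hx₀mem.1
    rw [ht₁] at this
    linarith
  have hx₀pos : ∀ i, 0 < lam i + x₀ := by
    intro i
    have := hlam0le i
    rw [ha] at hx₀gt
    linarith
  -- z₀ and its properties
  refine ⟨⟨(x₀:ℂ), ?_, ?_, ?_, ?_, ?_⟩, ?_⟩
  · simp only [Complex.ofReal_re]
    rw [ha] at hx₀gt
    linarith
  · intro i hci heq
    have : x₀ = -(lam i) := by exact_mod_cast heq
    have := hx₀pos i
    linarith
  · rw [secular_ofReal, hx₀]
    simp
  · apply order_one_of_deriv
    · apply secular_analyticAt
      intro i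
      rw [← Complex.ofReal_add, Complex.ofReal_ne_zero]
      exact ne_of_gt (hx₀pos i)
    · rw [secular_ofReal, hx₀]; simp
    · have hd := secular_hasDerivAt lam w q r x₀ (fun i => ne_of_gt (hx₀pos i))
      rw [hd.deriv]
      rw [Complex.ofReal_ne_zero]
      have hsum : 0 < ∑ i, (w i ⬝ᵥ q)^2/(lam i + x₀)^3 := by
        apply Finset.sum_pos'
        · intro i _
          have := hx₀pos i
          positivity
        · refine ⟨i0, Finset.mem_univ _, ?_⟩
          have := hx₀pos i0
          positivity
      rw [secularDeriv]
      intro h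
      nlinarith
  · intro z hz1 hz2 hz3
    by_cases him : z.im = 0
    · have hzeq : z = ((z.re:ℝ):ℂ) := Complex.ext (by simp) (by simp [him])
      set x := z.re with hx
      have hxR : secularR lam w q r x = 0 := by
        rw [hzeq, secular_ofReal] at hz3
        exact_mod_cast hz3
      rcases lt_trichotomy x a with hlt | heq | hgt
      · exfalso
        have := keyMid x hz1 (by rw [ha] at hlt; linarith)
        linarith
      · exfalso
        apply hz2 i0 hc1
        rw [hzeq, heq, ha]
        push_cast
        ring
      · have : x = x₀ := by
          apply hanti.injOn (Set.mem_Ioi.2 (by rw [ha] at hgt; linarith))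
            (Set.mem_Ioi.2 (by rw [ha] at hx₀gt; linarith))
          rw [hxR, hx₀]
        rw [hzeq, this]
    · exact absurd hz3 (keyNonreal z him (le_of_lt hz1))
  · intro z hre hne hnp hzero
    by_cases him : z.im = 0
    · exact hne (Complex.ext (by simp [hre]) (by simp [him]))
    · exact keyNonreal z him (le_of_eq hre.symm) hzero
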